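/- Let (P, ≤, *, 1) be a strongly sectionally pseudocomplemented poset, Θ a congruence on P, and define the relation ≤' on the quotient P/Θ by [a]Θ ≤' [b]Θ if and only if a*b ∈ [1]Θ. Then: (i) ≤' is well defined and a ≤ b implies [a]Θ ≤' [b]Θ; (ii) [a]Θ ≤' [b]Θ holds if and only if there exists c ∈ [b]Θ with a ≤ c; (iii) ≤' is a partial order on P/Θ (reflexive, antisymmetric and transitive). -/

import Mathlib

/-- `star` makes the poset `P` sectionally pseudocomplemented: for all `a b`,
`star a b` is the greatest element `c` of `P` with `L(U(a,b), c) = L(b)`,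
where `L(U(a,b), c)` is the set of common lower bounds of `U(a,b) ∪ {c}` and
`U(a,b)` is the set of common upper bounds of `a` and `b`. -/
def IsSPPoset {P : Type*} [PartialOrder P] (star : P → P → P) : Prop :=
  ∀ a b : P,
    (∀ x : P, ((∀ u : P, a ≤ u → b ≤ u → x ≤ u) ∧ x ≤ star a b) ↔ x ≤ b) ∧
    ∀ c : P, (∀ x : P, ((∀ u : P, a ≤ u → b ≤ u → x ≤ u) ∧ x ≤ c) ↔ x ≤ b) →
      c ≤ star a b

/-- A strongly sectionally pseudocomplemented poset: sectionally pseudocomplemented,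
with greatest element `one`, satisfying `x ≤ (x*y)*y`. -/
def IsStronglySPPoset {P : Type*} [PartialOrder P] (star : P → P → P) (one : P) : Prop :=
  IsSPPoset star ∧ (∀ x : P, x ≤ one) ∧ ∀ x y : P, x ≤ star (star x y) y

open Classical in
/-- The minimum of two (comparable) elements of a poset. -/
noncomputable def pmin {P : Type*} [PartialOrder P] (a c : P) : P :=
  if a ≤ c then a else c

/-- A binary relation on a poset is min-stable if it is closed under taking minima of
componentwise comparable pairs. -/
def MinStable {P : Type*} [PartialOrder P] (ρ : P → P → Prop) : Prop :=
  ∀ a b c d : P, ρ a b → ρ c d → (a ≤ c ∨ c ≤ a) → (b ≤ d ∨ d ≤ b) →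
    ρ (pmin a c) (pmin b d)

/-- A congruence on a sectionally pseudocomplemented poset: a min-stable equivalence
relation compatible with `star`. -/
def IsSPPCong {P : Type*} [PartialOrder P] (star : P → P → P) (Θ : P → P → Prop) : Prop :=
  Equivalence Θ ∧ MinStable Θ ∧
    ∀ a b c d : P, Θ a b → Θ c d → Θ (star a c) (star b d)

/-- A filter of a sectionally pseudocomplemented poset with greatest element `one`. -/
def IsSPPFilter {P : Type*} [PartialOrder P] (star : P → P → P) (one : P) (F : Set P) :
    Prop :=
  one ∈ F ∧
  (∀ x y z : P, star x y ∈ F → star y x ∈ F →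
    star (star x z) (star y z) ∈ F ∧ star (star z x) (star z y) ∈ F) ∧
  (∀ x y z v : P, star x y ∈ F → star y x ∈ F → star z v ∈ F → star v z ∈ F →
    (x ≤ z ∨ z ≤ x) → (y ≤ v ∨ v ≤ y) → star (pmin x z) (pmin y v) ∈ F)

/-- `Φ(M)`: the relation of all pairs `(x, y)` with `star x y ∈ M` and `star y x ∈ M`. -/
def PhiRel {P : Type*} (star : P → P → P) (M : Set P) : P → P → Prop :=
  fun x y => star x y ∈ M ∧ star y x ∈ M

/-- The congruence class of `one` under `Θ`. -/
def oneClass {P : Type*} (Θ : P → P → Prop) (one : P) : Set P := {x : P | Θ x one}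

/-!
Since `1` is the top element, `a * b = 1` whenever `a ≤ b`, and `1 * b = b`. Hence `a * b Θ 1`
gives `(a * b) * b Θ 1 * b = b` with `a ≤ (a * b) * b`, while `a ≤ c Θ b` gives
`a * b Θ a * c = 1`; this identifies `≤'` with "below some element of the class", from which
transitivity follows. For antisymmetry, `a ≤ c Θ b` and `b ≤ d Θ a` give, by min-stability,
`min(a, c) Θ min(d, b)`, that is `a Θ b`.
-/

theorem pmin_of_le {P : Type*} [PartialOrder P] {a c : P} (h : a ≤ c) : pmin a c = a := by
  simp [pmin, h]

theorem pmin_of_ge {P : Type*} [PartialOrder P] {a c : P} (h : c ≤ a) : pmin a c = c := by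
  unfold pmin
  split_ifs with hac
  exacts [le_antisymm hac h, rfl]

theorem MinStable.of_le_of_ge {P : Type*} [PartialOrder P] {ρ : P → P → Prop}
    (hρ : MinStable ρ) {a b c d : P} (had : ρ a d) (hcb : ρ c b) (hac : a ≤ c) (hbd : b ≤ d) :
    ρ a b := by
  simpa only [pmin_of_le hac, pmin_of_ge hbd] using hρ a d c b had hcb (Or.inl hac) (Or.inr hbd)

namespace IsSPPoset

variable {P : Type*} [PartialOrder P] {star : P → P → P} {one : P}

theorem le_star (h : IsSPPoset star) (a b : P) : b ≤ star a b :=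
  (((h a b).1 b).mpr le_rfl).2

theorem star_eq_top_of_le (h : IsSPPoset star) (hone : ∀ x, x ≤ one) {a b : P} (hab : a ≤ b) :
    star a b = one := by
  refine le_antisymm (hone _) ((h a b).2 one fun x => ⟨?_, ?_⟩)
  · rintro ⟨hx, -⟩
    exact hx b hab le_rfl
  · exact fun hxb => ⟨fun u _ hbu => hxb.trans hbu, hone x⟩

theorem top_star (h : IsSPPoset star) (hone : ∀ x, x ≤ one) (b : P) : star one b = b := by
  refine le_antisymm (((h one b).1 _).mp ⟨fun u hu _ => ?_, le_rfl⟩) (h.le_star one b)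
  rw [le_antisymm (hone u) hu]
  exact hone _

end IsSPPoset

namespace IsSPPCong

variable {P : Type*} [PartialOrder P] {star : P → P → P} {one : P} {Θ : P → P → Prop}

theorem star_rel_top_congr (hΘ : IsSPPCong star Θ) {a a' b b' : P} (ha : Θ a a')
    (hb : Θ b b') : Θ (star a b) one ↔ Θ (star a' b') one := by
  have hstar := hΘ.2.2 a a' b b' ha hb
  exact ⟨hΘ.1.trans (hΘ.1.symm hstar), hΘ.1.trans hstar⟩

theorem star_rel_top_of_le (hΘ : IsSPPCong star Θ) (h : IsStronglySPPoset star one) {a b : P}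
    (hab : a ≤ b) : Θ (star a b) one := by
  rw [h.1.star_eq_top_of_le h.2.1 hab]
  exact hΘ.1.refl one

theorem star_star_rel (hΘ : IsSPPCong star Θ) (h : IsStronglySPPoset star one) {a b : P}
    (hab : Θ (star a b) one) : Θ (star (star a b) b) b := by
  simpa only [h.1.top_star h.2.1] using hΘ.2.2 _ one b b hab (hΘ.1.refl b)

theorem star_rel_top_iff (hΘ : IsSPPCong star Θ) (h : IsStronglySPPoset star one) (a b : P) :
    Θ (star a b) one ↔ ∃ c, Θ b c ∧ a ≤ c := by
  constructor
  · exact fun hab => ⟨_, hΘ.1.symm (hΘ.star_star_rel h hab), h.2.2 a b⟩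
  · rintro ⟨c, hbc, hac⟩
    exact (hΘ.star_rel_top_congr (hΘ.1.refl a) hbc).mpr (hΘ.star_rel_top_of_le h hac)

theorem rel_of_star_rel_top (hΘ : IsSPPCong star Θ) (h : IsStronglySPPoset star one) {a b : P}
    (hab : Θ (star a b) one) (hba : Θ (star b a) one) : Θ a b := by
  obtain ⟨c, hbc, hac⟩ := (hΘ.star_rel_top_iff h a b).mp hab
  obtain ⟨d, had, hbd⟩ := (hΘ.star_rel_top_iff h b a).mp hba
  exact hΘ.2.1.of_le_of_ge had (hΘ.1.symm hbc) hac hbd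

theorem star_rel_top_trans (hΘ : IsSPPCong star Θ) (h : IsStronglySPPoset star one) {a b c : P}
    (hab : Θ (star a b) one) (hbc : Θ (star b c) one) : Θ (star a c) one := by
  obtain ⟨b', hbb', hab'⟩ := (hΘ.star_rel_top_iff h a b).mp hab
  obtain ⟨c', hcc', hbc'⟩ := (hΘ.star_rel_top_iff h b c).mp hbc
  have hb'c' : Θ (star b' c') one :=
    (hΘ.star_rel_top_congr hbb' (hΘ.1.refl c')).mp (hΘ.star_rel_top_of_le h hbc')
  exact (hΘ.star_rel_top_iff h a c).mpr
    ⟨_, hΘ.1.trans hcc' (hΘ.1.symm (hΘ.star_star_rel h hb'c')), hab'.trans (h.2.2 b' c')⟩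

end IsSPPCong

theorem stmt_18 {P : Type*} [PartialOrder P] (star : P → P → P) (one : P)
    (h : IsStronglySPPoset star one)
    (Θ : P → P → Prop) (hΘ : IsSPPCong star Θ)
    (le' : P → P → Prop) (hle' : ∀ a b : P, le' a b ↔ Θ (star a b) one) :
    -- (i) well-definedness on Θ-classes and compatibility with ≤
    (∀ a a' b b' : P, Θ a a' → Θ b b' → (le' a b ↔ le' a' b')) ∧
    (∀ a b : P, a ≤ b → le' a b) ∧
    -- (ii) characterization of ≤'
    (∀ a b : P, le' a b ↔ ∃ c : P, Θ b c ∧ a ≤ c) ∧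
    -- (iii) ≤' is a partial order on the quotient P/Θ
    (∀ a : P, le' a a) ∧
    (∀ a b : P, le' a b → le' b a → Θ a b) ∧
    (∀ a b c : P, le' a b → le' b c → le' a c) := by
  simp only [hle']
  exact ⟨fun _ _ _ _ => hΘ.star_rel_top_congr,
    fun _ _ => hΘ.star_rel_top_of_le h,
    hΘ.star_rel_top_iff h,
    fun _ => hΘ.star_rel_top_of_le h le_rfl,
    fun _ _ => hΘ.rel_of_star_rel_top h,
    fun _ _ _ => hΘ.star_rel_top_trans h⟩
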